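/- arXiv:1603.02931 — 4 statements merged into one kernel-verified Lean document; each statement's English description precedes it below -/
import Mathlib

section
/- Let H be a Hopf algebra and σ a normalized invertible dual 2-cocycle on H. Define on H the twisted multiplication (1#g)(1#h) = σ(g₍₁₎, h₍₁₎) (1 # g₍₂₎h₍₂₎). Then this multiplication is associative with unit 1#1, and the map β₁ : (1#h) ↦ h₍₁₎ ⊗ (1#h₍₂₎) is an algebra homomorphism from this twisted algebra ℂ#_σH to H^σ ⊗ (ℂ#_σH), where H^σ carries the cocycle-twisted multiplication g·_σ h = σ(g₍₁₎,h₍₁₎) g₍₂₎h₍₂₎ σ⁻¹(g₍₃₎,h₍₃₎). -/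
open TensorProduct

noncomputable section

variable {H : Type*} [Ring H] [HopfAlgebra ℂ H]

/-- `a ↦ a₍₁₎ ⊗ (a₍₂₎ ⊗ a₍₃₎)`, the twofold comultiplication. -/
noncomputable def comul₂ : H →ₗ[ℂ] H ⊗[ℂ] (H ⊗[ℂ] H) :=
  (TensorProduct.map LinearMap.id (Coalgebra.comul (R := ℂ))) ∘ₗ (Coalgebra.comul (R := ℂ))

/-- `σ(a₍₁₎,b₍₁₎)·σ(a₍₂₎b₍₂₎,c)` (Sweedler sums). -/
noncomputable def cocycleLHS (σ : H ⊗[ℂ] H →ₗ[ℂ] ℂ) (a b c : H) : ℂ :=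
  LinearMap.mul' ℂ ℂ
    (TensorProduct.map σ
      (σ ∘ₗ ((TensorProduct.mk ℂ H H).flip c) ∘ₗ LinearMap.mul' ℂ H)
      (TensorProduct.tensorTensorTensorComm ℂ H H H H
        ((Coalgebra.comul (R := ℂ) a) ⊗ₜ[ℂ] (Coalgebra.comul (R := ℂ) b))))

/-- `σ(b₍₁₎,c₍₁₎)·σ(a,b₍₂₎c₍₂₎)` (Sweedler sums). -/
noncomputable def cocycleRHS (σ : H ⊗[ℂ] H →ₗ[ℂ] ℂ) (a b c : H) : ℂ :=
  LinearMap.mul' ℂ ℂ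
    (TensorProduct.map σ
      (σ ∘ₗ (TensorProduct.mk ℂ H H a) ∘ₗ LinearMap.mul' ℂ H)
      (TensorProduct.tensorTensorTensorComm ℂ H H H H
        ((Coalgebra.comul (R := ℂ) b) ⊗ₜ[ℂ] (Coalgebra.comul (R := ℂ) c))))

/-- `σ` is a dual 2-cocycle. -/
def IsDualCocycle (σ : H ⊗[ℂ] H →ₗ[ℂ] ℂ) : Prop :=
  ∀ a b c : H, cocycleLHS σ a b c = cocycleRHS σ a b c

/-- `σ` is normalized: `σ(1,h) = σ(h,1) = ε(h)`. -/
def IsNormalizedDualCocycle (σ : H ⊗[ℂ] H →ₗ[ℂ] ℂ) : Prop :=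
  ∀ h : H, σ (1 ⊗ₜ[ℂ] h) = Coalgebra.counit (R := ℂ) h ∧
    σ (h ⊗ₜ[ℂ] 1) = Coalgebra.counit (R := ℂ) h

/-- Convolution `σ(a₍₁₎,b₍₁₎)·τ(a₍₂₎,b₍₂₎)`. -/
noncomputable def conv₂ (σ τ : H ⊗[ℂ] H →ₗ[ℂ] ℂ) (a b : H) : ℂ :=
  LinearMap.mul' ℂ ℂ
    (TensorProduct.map σ τ
      (TensorProduct.tensorTensorTensorComm ℂ H H H H
        ((Coalgebra.comul (R := ℂ) a) ⊗ₜ[ℂ] (Coalgebra.comul (R := ℂ) b))))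

/-- `σ'` is a convolution inverse of `σ`. -/
def IsConvInverse (σ σ' : H ⊗[ℂ] H →ₗ[ℂ] ℂ) : Prop :=
  ∀ a b : H,
    conv₂ σ σ' a b = Coalgebra.counit (R := ℂ) a * Coalgebra.counit (R := ℂ) b ∧
    conv₂ σ' σ a b = Coalgebra.counit (R := ℂ) a * Coalgebra.counit (R := ℂ) b

/-- The twisted multiplication `g ·_σ h = σ(g₍₁₎,h₍₁₎) g₍₂₎h₍₂₎ σ⁻¹(g₍₃₎,h₍₃₎)`,
as a linear map on `H ⊗ H`. -/
noncomputable def twistMul (σ σ' : H ⊗[ℂ] H →ₗ[ℂ] ℂ) : H ⊗[ℂ] H →ₗ[ℂ] H :=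
  (TensorProduct.lid ℂ H).toLinearMap ∘ₗ
  TensorProduct.map σ
    ((TensorProduct.rid ℂ H).toLinearMap ∘ₗ TensorProduct.map (LinearMap.mul' ℂ H) σ') ∘ₗ
  TensorProduct.map LinearMap.id
    (TensorProduct.tensorTensorTensorComm ℂ H H H H).toLinearMap ∘ₗ
  (TensorProduct.tensorTensorTensorComm ℂ H (H ⊗[ℂ] H) H (H ⊗[ℂ] H)).toLinearMap ∘ₗ
  TensorProduct.map comul₂ comul₂

/-- The smash product multiplication `(1#g)(1#h) = σ(g₍₁₎,h₍₁₎)·(1#g₍₂₎h₍₂₎)` on `ℂ#_σH`. -/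
noncomputable def smashMul (σ : H ⊗[ℂ] H →ₗ[ℂ] ℂ) : H ⊗[ℂ] H →ₗ[ℂ] H :=
  (TensorProduct.lid ℂ H).toLinearMap ∘ₗ
  TensorProduct.map σ (LinearMap.mul' ℂ H) ∘ₗ
  (TensorProduct.tensorTensorTensorComm ℂ H H H H).toLinearMap ∘ₗ
  TensorProduct.map (Coalgebra.comul (R := ℂ)) (Coalgebra.comul (R := ℂ))

/-!
The smash multiplication and the doubly twisted multiplication are convolution products in
`Hom(H ⊗ H, H)`: `m_σ = σ * m` and `·_σ = σ * m * σ⁻¹`, where `σ` stands for `1_H · σ`.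

Associativity: a scalar-valued convolution factor can be pulled out of an outer product, giving
`m_σ ∘ (m_σ ⊗ id) = σ(m_σ ⊗ id) * m(m ⊗ id)` on `(H ⊗ H) ⊗ H`, and symmetrically on the other side.
The cocycle identity says precisely `σ(m_σ(g, h), k) = σ(g, m_σ(h, k))`, so the two sides agree.

Comultiplicativity: `Δ ∘ m_σ = σ * (ι₁ m * ι₂ m)` with `ι₁ h = h ⊗ 1`, `ι₂ h = 1 ⊗ h`, because `Δ`
is an algebra map and `m` a coalgebra map; inserting `σ⁻¹ * σ = ε` between `ι₁ m` and `ι₂ m`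
regroups this as `ι₁(σ * m * σ⁻¹) * ι₂(σ * m) = (·_σ ⊗ m_σ) ∘ Δ`.
-/
open Coalgebra WithConv
open LinearMap hiding convMul_def

section Convolution
variable {R C D A B : Type*} [CommSemiring R] [AddCommMonoid C] [Module R C]
  [Semiring A] [Algebra R A] [Semiring B] [Algebra R B]

section
variable [CoalgebraStruct R C]

theorem toConv_algHom_comp_convMul (φ : A →ₐ[R] B) (f g : C →ₗ[R] A) :
    toConv (φ.toLinearMap ∘ₗ (toConv f * toConv g).ofConv) =
      toConv (φ.toLinearMap ∘ₗ f) * toConv (φ.toLinearMap ∘ₗ g) :=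
  congrArg toConv (algHom_comp_convMul_distrib φ _ _)

theorem toConv_map_comp_comul (f : C →ₗ[R] A) (g : C →ₗ[R] B) :
    toConv (map f g ∘ₗ comul) =
      toConv (Algebra.TensorProduct.includeLeft.toLinearMap ∘ₗ f) *
        toConv (Algebra.TensorProduct.includeRight.toLinearMap ∘ₗ g) := by
  rw [LinearMap.convMul_def, ← comp_assoc]
  congr 2
  ext; simp

variable [AddCommMonoid D] [Module R D] [Coalgebra R D]

theorem comp_rTensor_scalar_convMul (T : B ⊗[R] D →ₗ[R] A) (s : C →ₗ[R] R) (g : C →ₗ[R] B) :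
    toConv (T ∘ₗ rTensor D (toConv (Algebra.linearMap R B ∘ₗ s) * toConv g).ofConv) =
      toConv (Algebra.linearMap R A ∘ₗ mul' R R ∘ₗ map s counit) * toConv (T ∘ₗ rTensor D g) := by
  refine WithConv.ext (TensorProduct.ext' fun c d => ?_)
  conv_lhs => rw [← sum_counit_smul (ℛ R d)]
  simp [← (ℛ R c).eq, ← (ℛ R d).eq, TensorProduct.sum_tmul, TensorProduct.tmul_sum,
    ← Algebra.smul_def, Finset.smul_sum, smul_smul, ← TensorProduct.smul_tmul',
    TensorProduct.tmul_smul, mul_comm]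

theorem comp_lTensor_scalar_convMul (T : D ⊗[R] B →ₗ[R] A) (s : C →ₗ[R] R) (g : C →ₗ[R] B) :
    toConv (T ∘ₗ lTensor D (toConv (Algebra.linearMap R B ∘ₗ s) * toConv g).ofConv) =
      toConv (Algebra.linearMap R A ∘ₗ mul' R R ∘ₗ map counit s) * toConv (T ∘ₗ lTensor D g) := by
  refine WithConv.ext (TensorProduct.ext' fun d c => ?_)
  conv_lhs => rw [← sum_counit_smul (ℛ R d)]
  simp only [sum_tmul, ← smul_tmul', map_sum, map_smul, coe_comp, Function.comp_apply,
    lTensor_tmul, convMul_apply, ← (ℛ R c).eq, map_tmul, Algebra.linearMap_apply, mul'_apply,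
    ← Algebra.smul_def, tmul_sum, tmul_smul, Finset.smul_sum, smul_smul, mul_comm, comul_tmul,
    ← (ℛ R d).eq, AlgebraTensorModule.tensorTensorTensorComm_tmul, map_mul]
  rw [Finset.sum_comm]

end

theorem algebraLinearMap_comp_convMul_eq_one [Coalgebra R C] {s t : C →ₗ[R] R}
    (h : toConv s * toConv t = 1) :
    toConv (Algebra.linearMap R A ∘ₗ s) * toConv (Algebra.linearMap R A ∘ₗ t) = 1 := by
  calc _ = toConv ((Algebra.ofId R A).toLinearMap ∘ₗ (toConv s * toConv t).ofConv) :=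
        (toConv_algHom_comp_convMul (Algebra.ofId R A) s t).symm
    _ = 1 := by rw [h]; ext; simp

end Convolution

theorem AlgHom.toLinearMap_comp_algebraLinearMap {R A B M : Type*} [CommSemiring R]
    [Semiring A] [Algebra R A] [Semiring B] [Algebra R B] [AddCommMonoid M] [Module R M]
    (φ : A →ₐ[R] B) (s : M →ₗ[R] R) :
    φ.toLinearMap ∘ₗ Algebra.linearMap R A ∘ₗ s = Algebra.linearMap R B ∘ₗ s := by
  ext; simp

section SmashProduct
variable (σ σ' : H ⊗[ℂ] H →ₗ[ℂ] ℂ)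

theorem smashMul_eq_convMul :
    toConv (smashMul σ) = toConv (Algebra.linearMap ℂ H ∘ₗ σ) * toConv (mul' ℂ H) := by
  have hmul : (TensorProduct.lid ℂ H).toLinearMap ∘ₗ map σ (mul' ℂ H) =
      mul' ℂ H ∘ₗ map (Algebra.linearMap ℂ H ∘ₗ σ) (mul' ℂ H) := by
    ext; simp [Algebra.smul_def]
  rw [LinearMap.convMul_def, TensorProduct.comul_def, AlgebraTensorModule.map_eq,
    AlgebraTensorModule.tensorTensorTensorComm_eq, smashMul, ← comp_assoc, ← comp_assoc, hmul]
  rfl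

theorem twistMul_eq_convMul :
    toConv (twistMul σ σ') = toConv (Algebra.linearMap ℂ H ∘ₗ σ) *
      (toConv (mul' ℂ H) * toConv (Algebra.linearMap ℂ H ∘ₗ σ')) := by
  have hmul : (TensorProduct.lid ℂ H).toLinearMap ∘ₗ map σ
      ((TensorProduct.rid ℂ H).toLinearMap ∘ₗ map (mul' ℂ H) σ') =
      mul' ℂ H ∘ₗ map (Algebra.linearMap ℂ H ∘ₗ σ)
        (mul' ℂ H ∘ₗ map (mul' ℂ H) (Algebra.linearMap ℂ H ∘ₗ σ')) := by
    ext; simp [Algebra.smul_def, Algebra.commutes]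
  have hcomul : map LinearMap.id (tensorTensorTensorComm ℂ H H H H).toLinearMap ∘ₗ
      (tensorTensorTensorComm ℂ H (H ⊗[ℂ] H) H (H ⊗[ℂ] H)).toLinearMap ∘ₗ
        map (comul₂ (H := H)) comul₂ =
      lTensor (H ⊗[ℂ] H) (comul (R := ℂ) (A := H ⊗[ℂ] H)) ∘ₗ comul := by
    rw [comul₂, TensorProduct.map_comp, ← comp_assoc _ (map _ _),
      tensorTensorTensorComm_comp_map, TensorProduct.comul_def, AlgebraTensorModule.map_eq,
      AlgebraTensorModule.tensorTensorTensorComm_eq, TensorProduct.map_id]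
    simp only [← comp_assoc, ← lTensor_def, ← lTensor_comp]
  rw [LinearMap.convMul_def, LinearMap.convMul_def, twistMul]
  congr 1
  rw [hcomul, ← comp_assoc, hmul]
  simp only [← map_comp_lTensor, lTensor_comp, comp_assoc]

theorem smashMul_one_tmul (hnorm : IsNormalizedDualCocycle σ) (h : H) :
    smashMul σ (1 ⊗ₜ h) = h := by
  simp [smashMul, ← (ℛ ℂ h).eq, TensorProduct.tmul_sum, Algebra.TensorProduct.one_def, (hnorm _).1]

theorem smashMul_tmul_one (hnorm : IsNormalizedDualCocycle σ) (h : H) :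
    smashMul σ (h ⊗ₜ 1) = h := by
  simp [smashMul, ← (ℛ ℂ h).eq, TensorProduct.sum_tmul, Algebra.TensorProduct.one_def, (hnorm _).2]

theorem cocycleLHS_eq (a b c : H) : cocycleLHS σ a b c = σ (smashMul σ (a ⊗ₜ b) ⊗ₜ c) := by
  have key : mul' ℂ ℂ ∘ₗ map σ (σ ∘ₗ (TensorProduct.mk ℂ H H).flip c ∘ₗ mul' ℂ H) =
      σ ∘ₗ (TensorProduct.mk ℂ H H).flip c ∘ₗ (TensorProduct.lid ℂ H).toLinearMap ∘ₗ
        map σ (mul' ℂ H) := by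
    ext; simp
  exact congr($key _)

theorem cocycleRHS_eq (a b c : H) : cocycleRHS σ a b c = σ (a ⊗ₜ smashMul σ (b ⊗ₜ c)) := by
  have key : mul' ℂ ℂ ∘ₗ map σ (σ ∘ₗ TensorProduct.mk ℂ H H a ∘ₗ mul' ℂ H) =
      σ ∘ₗ TensorProduct.mk ℂ H H a ∘ₗ (TensorProduct.lid ℂ H).toLinearMap ∘ₗ
        map σ (mul' ℂ H) := by
    ext; simp
  exact congr($key _)

theorem IsDualCocycle.comp_rTensor_smashMul (hcoc : IsDualCocycle σ) :
    σ ∘ₗ rTensor H (smashMul σ) =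
      σ ∘ₗ lTensor H (smashMul σ) ∘ₗ (TensorProduct.assoc ℂ H H H).toLinearMap := by
  refine TensorProduct.ext_threefold fun a b c => ?_
  simpa [cocycleLHS_eq, cocycleRHS_eq] using hcoc a b c

theorem smashMul_comp_coalgHom {C : Type*} [AddCommMonoid C] [Module ℂ C] [CoalgebraStruct ℂ C]
    (h : C →ₗc[ℂ] H ⊗[ℂ] H) :
    toConv (smashMul σ ∘ₗ h.toLinearMap) =
      toConv (Algebra.linearMap ℂ H ∘ₗ σ ∘ₗ h.toLinearMap) *
        toConv (mul' ℂ H ∘ₗ h.toLinearMap) := by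
  have hdist := convMul_comp_coalgHom_distrib (toConv (Algebra.linearMap ℂ H ∘ₗ σ))
    (toConv (mul' ℂ H)) h
  rw [← smashMul_eq_convMul] at hdist
  exact congrArg toConv hdist

theorem smashMul_comp_rTensor_smashMul :
    toConv (smashMul σ ∘ₗ rTensor H (smashMul σ)) =
      toConv (Algebra.linearMap ℂ H ∘ₗ σ ∘ₗ rTensor H (smashMul σ)) *
        toConv (mul' ℂ H ∘ₗ rTensor H (mul' ℂ H)) := by
  have hT := comp_rTensor_scalar_convMul (smashMul σ) σ (mul' ℂ H)
  have hσ := comp_rTensor_scalar_convMul (Algebra.linearMap ℂ H ∘ₗ σ) σ (mul' ℂ H)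
  rw [← smashMul_eq_convMul] at hT hσ
  have hμ : toConv (smashMul σ ∘ₗ rTensor H (mul' ℂ H)) =
      toConv (Algebra.linearMap ℂ H ∘ₗ σ ∘ₗ rTensor H (mul' ℂ H)) *
        toConv (mul' ℂ H ∘ₗ rTensor H (mul' ℂ H)) :=
    smashMul_comp_coalgHom σ
      (Coalgebra.TensorProduct.map (Bialgebra.mulCoalgHom ℂ H) (CoalgHom.id ℂ H))
  rw [hT, hμ, ← mul_assoc]
  exact congrArg (· * _) hσ.symm

theorem smashMul_comp_lTensor_smashMul :
    toConv (smashMul σ ∘ₗ lTensor H (smashMul σ)) =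
      toConv (Algebra.linearMap ℂ H ∘ₗ σ ∘ₗ lTensor H (smashMul σ)) *
        toConv (mul' ℂ H ∘ₗ lTensor H (mul' ℂ H)) := by
  have hT := comp_lTensor_scalar_convMul (smashMul σ) σ (mul' ℂ H)
  have hσ := comp_lTensor_scalar_convMul (Algebra.linearMap ℂ H ∘ₗ σ) σ (mul' ℂ H)
  rw [← smashMul_eq_convMul] at hT hσ
  have hμ : toConv (smashMul σ ∘ₗ lTensor H (mul' ℂ H)) =
      toConv (Algebra.linearMap ℂ H ∘ₗ σ ∘ₗ lTensor H (mul' ℂ H)) *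
        toConv (mul' ℂ H ∘ₗ lTensor H (mul' ℂ H)) :=
    smashMul_comp_coalgHom σ
      (Coalgebra.TensorProduct.map (CoalgHom.id ℂ H) (Bialgebra.mulCoalgHom ℂ H))
  rw [hT, hμ, ← mul_assoc]
  exact congrArg (· * _) hσ.symm

theorem smashMul_assoc (hcoc : IsDualCocycle σ) :
    smashMul σ ∘ₗ rTensor H (smashMul σ) =
      smashMul σ ∘ₗ lTensor H (smashMul σ) ∘ₗ (TensorProduct.assoc ℂ H H H).toLinearMap := by
  have hmul : mul' ℂ H ∘ₗ rTensor H (mul' ℂ H) =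
      mul' ℂ H ∘ₗ lTensor H (mul' ℂ H) ∘ₗ (TensorProduct.assoc ℂ H H H).toLinearMap := by
    ext; simp [mul_assoc]
  apply toConv_injective
  rw [smashMul_comp_rTensor_smashMul, hcoc.comp_rTensor_smashMul, hmul]
  have hdist := convMul_comp_coalgHom_distrib
    (toConv (Algebra.linearMap ℂ H ∘ₗ σ ∘ₗ lTensor H (smashMul σ)))
    (toConv (mul' ℂ H ∘ₗ lTensor H (mul' ℂ H))) (Coalgebra.TensorProduct.assoc ℂ ℂ H H H).toCoalgHom
  rw [← smashMul_comp_lTensor_smashMul] at hdist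
  exact (congrArg toConv hdist).symm

theorem isConvInverse_iff :
    IsConvInverse σ σ' ↔ toConv σ * toConv σ' = 1 ∧ toConv σ' * toConv σ = 1 := by
  have hone (a b : H) :
      (1 : WithConv (H ⊗[ℂ] H →ₗ[ℂ] ℂ)) (a ⊗ₜ b) = counit (R := ℂ) a * counit (R := ℂ) b := by
    simp [mul_comm]
  have key (τ τ' : H ⊗[ℂ] H →ₗ[ℂ] ℂ) :
      (∀ a b : H, conv₂ τ τ' a b = counit (R := ℂ) a * counit (R := ℂ) b) ↔
        toConv τ * toConv τ' = 1 :=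
    ⟨fun h => WithConv.ext (TensorProduct.ext' fun a b => (h a b).trans (hone a b).symm),
      fun h a b => congr($h (a ⊗ₜ b)).trans (hone a b)⟩
  rw [IsConvInverse, ← key, ← key]
  simp only [forall_and]

theorem comul_comp_smashMul (hinv : toConv σ' * toConv σ = 1) :
    comul ∘ₗ smashMul σ = map (twistMul σ σ') (smashMul σ) ∘ₗ comul := by
  set ι₁ := (Algebra.TensorProduct.includeLeft : H →ₐ[ℂ] H ⊗[ℂ] H)
  set ι₂ := (Algebra.TensorProduct.includeRight : H →ₐ[ℂ] H ⊗[ℂ] H)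
  have hsmash : smashMul σ = (toConv (Algebra.linearMap ℂ H ∘ₗ σ) * toConv (mul' ℂ H)).ofConv :=
    congrArg ofConv (smashMul_eq_convMul σ)
  have htwist : twistMul σ σ' = (toConv (Algebra.linearMap ℂ H ∘ₗ σ) *
      (toConv (mul' ℂ H) * toConv (Algebra.linearMap ℂ H ∘ₗ σ'))).ofConv :=
    congrArg ofConv (twistMul_eq_convMul σ σ')
  have hcomul : toConv (comul ∘ₗ mul' ℂ H) =
      toConv (ι₁.toLinearMap ∘ₗ mul' ℂ H) * toConv (ι₂.toLinearMap ∘ₗ mul' ℂ H) := by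
    rw [← toConv_map_comp_comul]
    exact congrArg toConv (Bialgebra.mulCoalgHom ℂ H).map_comp_comul.symm
  apply toConv_injective
  calc toConv (comul ∘ₗ smashMul σ)
      = toConv (Algebra.linearMap ℂ (H ⊗[ℂ] H) ∘ₗ σ) *
          (toConv (ι₁.toLinearMap ∘ₗ mul' ℂ H) * toConv (ι₂.toLinearMap ∘ₗ mul' ℂ H)) := by
        rw [← hcomul, hsmash, ← Bialgebra.toLinearMap_comulAlgHom, toConv_algHom_comp_convMul,
          AlgHom.toLinearMap_comp_algebraLinearMap]
    _ = toConv (Algebra.linearMap ℂ (H ⊗[ℂ] H) ∘ₗ σ) *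
          (toConv (ι₁.toLinearMap ∘ₗ mul' ℂ H) *
            ((toConv (Algebra.linearMap ℂ (H ⊗[ℂ] H) ∘ₗ σ') *
              toConv (Algebra.linearMap ℂ (H ⊗[ℂ] H) ∘ₗ σ)) *
                toConv (ι₂.toLinearMap ∘ₗ mul' ℂ H))) := by
        rw [algebraLinearMap_comp_convMul_eq_one hinv, one_mul]
    _ = toConv (ι₁.toLinearMap ∘ₗ twistMul σ σ') * toConv (ι₂.toLinearMap ∘ₗ smashMul σ) := by
        rw [htwist, hsmash, toConv_algHom_comp_convMul, toConv_algHom_comp_convMul,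
          toConv_algHom_comp_convMul, AlgHom.toLinearMap_comp_algebraLinearMap,
          AlgHom.toLinearMap_comp_algebraLinearMap, AlgHom.toLinearMap_comp_algebraLinearMap]
        simp only [mul_assoc]
    _ = toConv (map (twistMul σ σ') (smashMul σ) ∘ₗ comul) := (toConv_map_comp_comul _ _).symm

end SmashProduct

/-- the twisted multiplication on `ℂ#_σH` is associative with unit `1#1`,
and `β₁ = Δ : (1#h) ↦ h₍₁₎ ⊗ (1#h₍₂₎)` is an algebra homomorphism
`ℂ#_σH → H^σ ⊗ (ℂ#_σH)`. -/
theorem smash_assoc_unital_and_comul_hom (σ σ' : H ⊗[ℂ] H →ₗ[ℂ] ℂ)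
    (hcoc : IsDualCocycle σ) (hnorm : IsNormalizedDualCocycle σ)
    (hinv : IsConvInverse σ σ') :
    (∀ g h k : H,
      smashMul σ ((smashMul σ (g ⊗ₜ[ℂ] h)) ⊗ₜ[ℂ] k) =
      smashMul σ (g ⊗ₜ[ℂ] (smashMul σ (h ⊗ₜ[ℂ] k)))) ∧
    (∀ h : H, smashMul σ ((1 : H) ⊗ₜ[ℂ] h) = h ∧ smashMul σ (h ⊗ₜ[ℂ] (1 : H)) = h) ∧
    (Coalgebra.comul (R := ℂ) (1 : H) = (1 : H) ⊗ₜ[ℂ] (1 : H)) ∧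
    (∀ g h : H,
      Coalgebra.comul (R := ℂ) (smashMul σ (g ⊗ₜ[ℂ] h)) =
        (TensorProduct.map (twistMul σ σ') (smashMul σ))
          ((TensorProduct.tensorTensorTensorComm ℂ H H H H)
            ((Coalgebra.comul (R := ℂ) g) ⊗ₜ[ℂ] (Coalgebra.comul (R := ℂ) h)))) :=
  ⟨fun g h k => congr($(smashMul_assoc σ hcoc) ((g ⊗ₜ h) ⊗ₜ k)),
    fun h => ⟨smashMul_one_tmul σ hnorm h, smashMul_tmul_one σ hnorm h⟩,
    by rw [Bialgebra.comul_one, Algebra.TensorProduct.one_def],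
    fun g h => congr($(comul_comp_smashMul σ σ' ((isConvInverse_iff σ σ').mp hinv).2) (g ⊗ₜ h))⟩
end
end

section
/- Let H be a Hopf algebra, σ a normalized invertible dual 2-cocycle on H, A a right H-comodule algebra with coaction α, and B = H equipped with the twisted multiplication (g#1)(h#1) = g₍₁₎h₍₁₎ # σ⁻¹(g₍₂₎,h₍₂₎) (a left H-comodule algebra via Δ). Then the map λ : a ↦ a₍₀₎ ⊗ (a₍₁₎#1) is an algebra isomorphism from the twisted algebra A#_{σ⁻¹}ℂ (with product a∙a' = a₍₀₎a'₍₀₎σ⁻¹(a₍₁₎,a'₍₁₎)) onto the cotensor product A □_H B = { z ∈ A ⊗ B : (α⊗id)(z) = (id⊗Δ)(z) }, with inverse z ↦ (id ⊗ ε)(z). -/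
/-
The map `λ` is the coaction `α` itself, so everything reduces to coassociativity of `α`.
Both twisted products factor through the product `x⊗h⊗g · y⊗k⊗g' = xy ⊗ hk σ⁻¹(g,g')` on
`A ⊗ H ⊗ H`: the twisted product in `A` after `(α ⊗ id) ∘ α`, the product of `A ⊗ B` after
`(id ⊗ Δ) ∘ α`, and coassociativity says these two maps agree. For `z ∈ A □_H B`, applying
`id ⊗ id ⊗ ε` to `(α ⊗ id) z = (id ⊗ Δ) z` gives `α ((id ⊗ ε) z) = z` by the counit law.
-/

open TensorProduct

noncomputable section

variable {H : Type*} [Ring H] [HopfAlgebra ℂ H]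
variable {A : Type*} [Ring A] [Algebra ℂ A]


/-- The twisted multiplication `a ∙ a' = a₍₀₎a'₍₀₎ σ⁻¹(a₍₁₎,a'₍₁₎)` on a right
`H`-comodule algebra `A` with coaction `α`. -/
noncomputable def comodTwistMul (α : A →ₐ[ℂ] A ⊗[ℂ] H) (σ' : H ⊗[ℂ] H →ₗ[ℂ] ℂ) :
    A ⊗[ℂ] A →ₗ[ℂ] A :=
  (TensorProduct.rid ℂ A).toLinearMap ∘ₗ
  TensorProduct.map (LinearMap.mul' ℂ A) σ' ∘ₗ
  (TensorProduct.tensorTensorTensorComm ℂ A H A H).toLinearMap ∘ₗ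
  TensorProduct.map α.toLinearMap α.toLinearMap

/-- The twisted multiplication `(g#1)(h#1) = g₍₁₎h₍₁₎ σ⁻¹(g₍₂₎,h₍₂₎)` on `B = H⨳_{σ⁻¹}ℂ`. -/
noncomputable def bTwistMul (σ' : H ⊗[ℂ] H →ₗ[ℂ] ℂ) : H ⊗[ℂ] H →ₗ[ℂ] H :=
  (TensorProduct.rid ℂ H).toLinearMap ∘ₗ
  TensorProduct.map (LinearMap.mul' ℂ H) σ' ∘ₗ
  (TensorProduct.tensorTensorTensorComm ℂ H H H H).toLinearMap ∘ₗ
  TensorProduct.map (Coalgebra.comul (R := ℂ)) (Coalgebra.comul (R := ℂ))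

/-- The cotensor product `A □_H B` for a right coaction `α` on `A` and the left
`H`-comodule structure `Δ` on `B = H`. -/
noncomputable def cotensor (α : A →ₐ[ℂ] A ⊗[ℂ] H) : Submodule ℂ (A ⊗[ℂ] H) :=
  LinearMap.ker
    ((TensorProduct.assoc ℂ A H H).toLinearMap ∘ₗ
        TensorProduct.map α.toLinearMap LinearMap.id -
      TensorProduct.map LinearMap.id (Coalgebra.comul (R := ℂ)))

/-- The product on `A ⊗ B`: `(a⊗b)(a'⊗b') = aa' ⊗ (b ∙ b')`. -/
noncomputable def prodAB (σ' : H ⊗[ℂ] H →ₗ[ℂ] ℂ) :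
    (A ⊗[ℂ] H) ⊗[ℂ] (A ⊗[ℂ] H) →ₗ[ℂ] A ⊗[ℂ] H :=
  TensorProduct.map (LinearMap.mul' ℂ A) (bTwistMul σ') ∘ₗ
  (TensorProduct.tensorTensorTensorComm ℂ A H A H).toLinearMap

section TensorAlgebra

variable {R C W V N N' M : Type*} [CommSemiring R]
  [Semiring C] [Algebra R C] [Semiring W] [Algebra R W]
  [AddCommMonoid V] [Module R V] [AddCommMonoid N] [Module R N]
  [AddCommMonoid N'] [Module R N'] [AddCommMonoid M] [Module R M]

def pairingMul (τ : V ⊗[R] V →ₗ[R] R) : (C ⊗[R] V) ⊗[R] (C ⊗[R] V) →ₗ[R] C :=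
  (TensorProduct.rid R C).toLinearMap ∘ₗ map (LinearMap.mul' R C) τ ∘ₗ
    (TensorProduct.tensorTensorTensorComm R C V C V).toLinearMap

@[simp]
lemma pairingMul_tmul (τ : V ⊗[R] V →ₗ[R] R) (c c' : C) (v v' : V) :
    pairingMul τ ((c ⊗ₜ v) ⊗ₜ (c' ⊗ₜ v')) = τ (v ⊗ₜ v') • (c * c') := by
  simp [pairingMul]

lemma AlgHom.comp_pairingMul (f : C →ₐ[R] W) (τ : V ⊗[R] V →ₗ[R] R) :
    f.toLinearMap ∘ₗ pairingMul τ =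
      pairingMul τ ∘ₗ map (map f.toLinearMap LinearMap.id) (map f.toLinearMap LinearMap.id) := by
  ext c v c' v'
  simp

/-- `(c ⊗ n) ⊗ (c' ⊗ n') ↦ cc' ⊗ μ(n, n')`. -/
def tensorMulWith (μ : N ⊗[R] N →ₗ[R] N') : (C ⊗[R] N) ⊗[R] (C ⊗[R] N) →ₗ[R] C ⊗[R] N' :=
  map (LinearMap.mul' R C) μ ∘ₗ
    (TensorProduct.tensorTensorTensorComm R C N C N).toLinearMap

lemma tensorMulWith_comp_map (μ : N ⊗[R] N →ₗ[R] N') (g : M →ₗ[R] N) :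
    tensorMulWith (C := C) (μ ∘ₗ map g g) =
      tensorMulWith μ ∘ₗ map (map LinearMap.id g) (map LinearMap.id g) := by
  ext c m c' m'
  simp [tensorMulWith]

lemma pairingMul_eq_tensorMulWith_comp_assoc (τ : V ⊗[R] V →ₗ[R] R) :
    pairingMul (C := C ⊗[R] W) τ =
      tensorMulWith (pairingMul τ) ∘ₗ map (TensorProduct.assoc R C W V).toLinearMap
        (TensorProduct.assoc R C W V).toLinearMap := by
  ext c w v c' w' v'
  simp [tensorMulWith, Algebra.TensorProduct.tmul_mul_tmul, smul_tmul', tmul_smul]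

end TensorAlgebra

section Counit

variable {R M N V : Type*} [CommSemiring R] [AddCommMonoid M] [Module R M]
  [AddCommMonoid N] [Module R N] [AddCommMonoid V] [Module R V]

/-- `m ⊗ v ⊗ v' ↦ φ(v') • (m ⊗ v)`. -/
def lTensorLast (φ : V →ₗ[R] R) : M ⊗[R] (V ⊗[R] V) →ₗ[R] M ⊗[R] V :=
  map LinearMap.id ((TensorProduct.rid R V).toLinearMap ∘ₗ map LinearMap.id φ)

lemma lTensorLast_comp_assoc_comp_map (φ : V →ₗ[R] R) (f : M →ₗ[R] N ⊗[R] V) :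
    lTensorLast φ ∘ₗ (TensorProduct.assoc R N V V).toLinearMap ∘ₗ map f LinearMap.id =
      f ∘ₗ (TensorProduct.rid R M).toLinearMap ∘ₗ map LinearMap.id φ := by
  refine ext' fun m v => ?_
  simp only [LinearMap.coe_comp, LinearEquiv.coe_coe, Function.comp_apply, map_tmul,
    LinearMap.id_coe, id_eq, TensorProduct.rid_tmul, map_smul]
  induction f m using TensorProduct.induction_on with
  | zero => simp
  | tmul n v' => simp [lTensorLast, smul_tmul', tmul_smul]
  | add x y hx hy => simp_all [add_tmul]

lemma lTensorLast_counit_comp_lTensor_comul [Coalgebra R V] :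
    lTensorLast (M := M) (Coalgebra.counit (R := R) (A := V)) ∘ₗ
        map LinearMap.id Coalgebra.comul = LinearMap.id := by
  ext m v
  have hv := Coalgebra.lTensor_counit_comul (R := R) v
  simp only [LinearMap.lTensor] at hv
  simp [lTensorLast, hv]

end Counit

lemma prodAB_eq_tensorMulWith_comp_comul (σ' : H ⊗[ℂ] H →ₗ[ℂ] ℂ) :
    prodAB (A := A) σ' =
      tensorMulWith (pairingMul σ') ∘ₗ
        map (map LinearMap.id Coalgebra.comul) (map LinearMap.id Coalgebra.comul) :=
  tensorMulWith_comp_map (pairingMul σ') Coalgebra.comul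

lemma mem_cotensor_iff (α : A →ₐ[ℂ] A ⊗[ℂ] H) (z : A ⊗[ℂ] H) :
    z ∈ cotensor α ↔
      TensorProduct.assoc ℂ A H H (map α.toLinearMap LinearMap.id z) =
        map LinearMap.id Coalgebra.comul z := by
  simp [cotensor, sub_eq_zero]

lemma coaction_rid_counit_of_mem_cotensor (α : A →ₐ[ℂ] A ⊗[ℂ] H) {z : A ⊗[ℂ] H}
    (hz : z ∈ cotensor α) :
    α (TensorProduct.rid ℂ A (map LinearMap.id Coalgebra.counit z)) = z :=
  calc α (TensorProduct.rid ℂ A (map LinearMap.id Coalgebra.counit z))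
      = lTensorLast Coalgebra.counit
          (TensorProduct.assoc ℂ A H H (map α.toLinearMap LinearMap.id z)) :=
        (LinearMap.congr_fun (lTensorLast_comp_assoc_comp_map _ α.toLinearMap) z).symm
    _ = lTensorLast Coalgebra.counit (map LinearMap.id Coalgebra.comul z) := by
        rw [(mem_cotensor_iff α z).1 hz]
    _ = z := LinearMap.congr_fun lTensorLast_counit_comp_lTensor_comul z

section Coaction

variable (σ' : H ⊗[ℂ] H →ₗ[ℂ] ℂ) (α : A →ₐ[ℂ] A ⊗[ℂ] H)
  (hαco : ∀ a : A,
    TensorProduct.assoc ℂ A H H (map α.toLinearMap LinearMap.id (α a)) =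
      map LinearMap.id Coalgebra.comul (α a))
include hαco

lemma coaction_comodTwistMul (a a' : A) :
    α (comodTwistMul α σ' (a ⊗ₜ a')) = prodAB σ' (α a ⊗ₜ α a') :=
  calc α (comodTwistMul α σ' (a ⊗ₜ a'))
      = α (pairingMul σ' (α a ⊗ₜ α a')) := rfl
    _ = tensorMulWith (pairingMul σ')
          (TensorProduct.assoc ℂ A H H (map α.toLinearMap LinearMap.id (α a)) ⊗ₜ
            TensorProduct.assoc ℂ A H H (map α.toLinearMap LinearMap.id (α a'))) := by
      refine (LinearMap.congr_fun (α.comp_pairingMul σ') _).trans ?_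
      rw [pairingMul_eq_tensorMulWith_comp_assoc]
      rfl
    _ = prodAB σ' (α a ⊗ₜ α a') := by
      rw [hαco, hαco, prodAB_eq_tensorMulWith_comp_comul]
      rfl

end Coaction

theorem twisted_iso_cotensor_general (σ' : H ⊗[ℂ] H →ₗ[ℂ] ℂ)
    (α : A →ₐ[ℂ] A ⊗[ℂ] H)
    (hαco : ∀ a : A,
      (TensorProduct.assoc ℂ A H H)
          ((TensorProduct.map α.toLinearMap LinearMap.id) (α a)) =
        (TensorProduct.map LinearMap.id (Coalgebra.comul (R := ℂ))) (α a)) :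
    -- λ maps into the cotensor product
    (∀ a : A, α a ∈ cotensor (H := H) (A := A) α) ∧
    -- λ is multiplicative for the twisted products
    (∀ a a' : A,
      α (comodTwistMul α σ' (a ⊗ₜ[ℂ] a')) = prodAB σ' ((α a) ⊗ₜ[ℂ] (α a'))) ∧
    -- λ is unital
    (α 1 = 1) ∧
    -- `(id ⊗ ε)` is a left inverse of λ (this is `hαcu`) and a right inverse on the
    -- cotensor product, so λ is bijective onto `A □_H B`
    (∀ z ∈ cotensor (H := H) (A := A) α,
      α ((TensorProduct.rid ℂ A)
          ((TensorProduct.map LinearMap.id (Coalgebra.counit (R := ℂ))) z)) = z) :=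
  ⟨fun a => (mem_cotensor_iff α (α a)).2 (hαco a),
    coaction_comodTwistMul σ' α hαco, map_one α,
    fun _ hz => coaction_rid_counit_of_mem_cotensor α hz⟩

/-- `λ : a ↦ a₍₀₎ ⊗ (a₍₁₎#1)`, i.e. `α`, is an algebra isomorphism from
`A⨳_{σ⁻¹}ℂ` onto the cotensor product `A □_H B`, with inverse `(id ⊗ ε)`. -/
theorem twisted_iso_cotensor (σ σ' : H ⊗[ℂ] H →ₗ[ℂ] ℂ)
    (hcoc : IsDualCocycle σ) (hnorm : IsNormalizedDualCocycle σ)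
    (hinv : IsConvInverse σ σ')
    (α : A →ₐ[ℂ] A ⊗[ℂ] H)
    (hαco : ∀ a : A,
      (TensorProduct.assoc ℂ A H H)
          ((TensorProduct.map α.toLinearMap LinearMap.id) (α a)) =
        (TensorProduct.map LinearMap.id (Coalgebra.comul (R := ℂ))) (α a))
    (hαcu : ∀ a : A,
      (TensorProduct.rid ℂ A)
          ((TensorProduct.map LinearMap.id (Coalgebra.counit (R := ℂ))) (α a)) = a) :
    -- λ maps into the cotensor product
    (∀ a : A, α a ∈ cotensor (H := H) (A := A) α) ∧
    -- λ is multiplicative for the twisted products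
    (∀ a a' : A,
      α (comodTwistMul α σ' (a ⊗ₜ[ℂ] a')) = prodAB σ' ((α a) ⊗ₜ[ℂ] (α a'))) ∧
    -- λ is unital
    (α 1 = 1) ∧
    -- `(id ⊗ ε)` is a left inverse of λ (this is `hαcu`) and a right inverse on the
    -- cotensor product, so λ is bijective onto `A □_H B`
    (∀ z ∈ cotensor (H := H) (A := A) α,
      α ((TensorProduct.rid ℂ A)
          ((TensorProduct.map LinearMap.id (Coalgebra.counit (R := ℂ))) z)) = z) :=
  twisted_iso_cotensor_general σ' α hαco
end
end

section
/- Let 0 < q ≤ 1 and F ∈ GL(2,ℂ) satisfy F·conj(F) = c·I₂ with c ∈ ℝ. Then there is a unitary v ∈ U(2) such that v F vᵀ equals a scalar multiple of F_{q'} = ((0, |q'|^{1/2}), (−sgn(q')|q'|^{−1/2}, 0)) for some q' ∈ [−1,1]\{0}; i.e. up to the equivalence F₁ ∼ F₂ ⟺ ∃v ∈ U(2): F₁ = vF₂vᵀ (and scaling), every such 2×2 matrix F is equivalent to some F_q. -/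
/-!
Unitary congruence `F ↦ v F vᵀ` preserves the relation `F F̄ = c I`. Taking the first row of `v`
to be a unit isotropic vector of the quadratic form `x ↦ xᵀ F x` kills the `(0,0)` entry of
`G = v F vᵀ`. The diagonal entries of `G Ḡ = c I` then force `|G₀₀| = |G₁₁|`, so `G` is
antidiagonal with `G₀₁ · conj G₁₀ = c`. Hence `G₀₁ / G₁₀ = c / |G₁₀|²` is real, and after
possibly swapping the two basis vectors it has absolute value at most one: `G` is a multiple
of `F_q` with `q = -G₀₁ / G₁₀`.
-/

open Matrix ComplexConjugate Complex

section

variable {n R : Type*} [Fintype n] [DecidableEq n] [CommRing R] [StarRing R]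

theorem Matrix.mul_map_conj_unitary_congr {F v : Matrix n n R} (hv : v ∈ unitaryGroup n R)
    {c : R} (hF : F * F.map (starRingEnd R) = c • 1) :
    v * F * vᵀ * (v * F * vᵀ).map (starRingEnd R) = c • 1 := by
  have hvt : vᵀ * v.map (starRingEnd R) = 1 := by
    have := congrArg transpose (mem_unitaryGroup_iff'.1 hv)
    rwa [transpose_mul, transpose_one, star_eq_conjTranspose, conjTranspose_transpose] at this
  have hmap : (v * F * vᵀ).map (starRingEnd R) =
      v.map (starRingEnd R) * F.map (starRingEnd R) * star v := by
    rw [Matrix.map_mul, Matrix.map_mul, transpose_map, star_eq_conjTranspose]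
    rfl
  calc v * F * vᵀ * (v * F * vᵀ).map (starRingEnd R)
      = v * (F * (vᵀ * v.map (starRingEnd R)) * F.map (starRingEnd R)) * star v := by
        rw [hmap]; noncomm_ring
    _ = c • 1 := by
        rw [hvt, Matrix.mul_one, hF, Matrix.mul_smul, Matrix.smul_mul, Matrix.mul_one,
          mem_unitaryGroup_iff.1 hv]

theorem Matrix.ne_zero_of_mul_map_conj_eq_smul_one [Nonempty n] [Nontrivial R]
    {F : Matrix n n R} (hF : IsUnit F.det) {c : R}
    (h : F * F.map (starRingEnd R) = c • 1) : c ≠ 0 := by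
  rintro rfl
  rw [zero_smul] at h
  have hconj : F.map (starRingEnd R) = 0 :=
    ((isUnit_iff_isUnit_det F).2 hF).mul_right_eq_zero.1 h
  have hF0 : F = 0 := by
    ext i j
    simpa using congrArg (starRingEnd R) (congrFun₂ hconj i j)
  simp [hF0] at hF

theorem Matrix.mem_unitaryGroup_fin_two {x y : R} (h : x * star x + y * star y = 1) :
    !![x, y; -star y, star x] ∈ unitaryGroup (Fin 2) R := by
  rw [mem_unitaryGroup_iff, star_eq_conjTranspose, eta_fin_two !![x, y; -star y, star x]ᴴ,
    mul_fin_two, one_fin_two]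
  simp only [Fin.isValue, conjTranspose_apply, of_apply, cons_val', cons_val_zero,
    cons_val_fin_one, cons_val_one, star_neg, star_star, mul_neg, neg_mul, neg_neg,
    EmbeddingLike.apply_eq_iff_eq, vecCons_inj, and_true]
  exact ⟨⟨h, by ring⟩, by ring, by linear_combination h⟩

end

open Polynomial in
theorem IsAlgClosed.exists_ne_zero_quadratic_eq_zero {K : Type*} [Field K] [IsAlgClosed K]
    (a b e : K) : ∃ x y : K, (x, y) ≠ 0 ∧ a * x ^ 2 + b * x * y + e * y ^ 2 = 0 := by
  by_cases ha : a = 0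
  · exact ⟨1, 0, by simp, by simp [ha]⟩
  · obtain ⟨t, ht⟩ := IsAlgClosed.exists_root (C a * X ^ 2 + C b * X + C e)
      (by rw [degree_quadratic ha]; decide)
    exact ⟨t, 1, by simp, by simpa using ht⟩

theorem Matrix.exists_unitary_congr_apply_zero_zero (F : Matrix (Fin 2) (Fin 2) ℂ) :
    ∃ v ∈ unitaryGroup (Fin 2) ℂ, (v * F * vᵀ) 0 0 = 0 := by
  obtain ⟨x, y, hxy, hQ⟩ :=
    IsAlgClosed.exists_ne_zero_quadratic_eq_zero (F 0 0) (F 0 1 + F 1 0) (F 1 1)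
  have hpos : 0 < normSq x + normSq y := by
    rcases eq_or_ne x 0 with rfl | hx
    · have hy : y ≠ 0 := by simpa using hxy
      simpa using normSq_pos.2 hy
    · exact add_pos_of_pos_of_nonneg (normSq_pos.2 hx) (normSq_nonneg y)
  set r : ℂ := ofReal √(normSq x + normSq y) with hr
  have hr0 : r ≠ 0 := by simpa [hr] using (Real.sqrt_pos.2 hpos).ne'
  have hrs : star r = r := conj_ofReal _
  have hr2 : x * star x + y * star y = r ^ 2 := by
    simp only [hr, star_def, mul_conj]
    norm_cast
    exact (Real.sq_sqrt hpos.le).symm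
  refine ⟨!![x / r, y / r; -star (y / r), star (x / r)], mem_unitaryGroup_fin_two ?_, ?_⟩
  · simp only [star_div₀, hrs]
    field_simp
    exact hr2
  · simp only [mul_apply, Fin.sum_univ_two, transpose_apply, of_apply, cons_val', cons_val_zero,
      cons_val_one, cons_val_fin_one]
    field_simp
    linear_combination hQ

theorem Matrix.eq_antidiag_of_mul_map_conj_eq_smul_one {G : Matrix (Fin 2) (Fin 2) ℂ} {c : ℝ}
    (h : G * G.map (starRingEnd ℂ) = (c : ℂ) • 1) (h00 : G 0 0 = 0) :
    G = !![0, G 0 1; G 1 0, 0] ∧ G 0 1 * conj (G 1 0) = c := by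
  have e00 : G 0 1 * conj (G 1 0) = c := by
    simpa [h00, mul_apply, Fin.sum_univ_two] using congrFun₂ h 0 0
  have e11 : G 1 0 * conj (G 0 1) + G 1 1 * conj (G 1 1) = c := by
    simpa [mul_apply, Fin.sum_univ_two] using congrFun₂ h 1 1
  have h11 : G 1 1 = 0 := by
    have e00' : conj (G 0 1) * G 1 0 = c := by simpa using congrArg conj e00
    rw [← normSq_eq_zero, ← ofReal_eq_zero, ← mul_conj]
    linear_combination e11 - e00'
  refine ⟨?_, e00⟩
  conv_lhs => rw [eta_fin_two G, h00, h11]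

theorem Complex.exists_real_eq_neg_mul_of_mul_conj_eq {b d : ℂ} {c : ℝ} (hc : c ≠ 0)
    (h : b * conj d = c) (hle : normSq b ≤ normSq d) :
    ∃ q : ℝ, q ∈ Set.Icc (-1) 1 ∧ q ≠ 0 ∧ b = -q * d := by
  have hd : d ≠ 0 := by
    rintro rfl
    exact hc (by simpa using h.symm)
  have hnd : 0 < normSq d := normSq_pos.2 hd
  have hcd : c ^ 2 ≤ normSq d ^ 2 := by
    have := congrArg normSq h
    rw [normSq_mul, normSq_conj, normSq_ofReal] at this
    nlinarith
  refine ⟨-c / normSq d, ?_, div_ne_zero (neg_ne_zero.2 hc) hnd.ne', ?_⟩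
  · rw [Set.mem_Icc, ← abs_le, abs_div, abs_neg, abs_of_pos hnd, div_le_one hnd]
    exact abs_le_of_sq_le_sq hcd hnd.le
  · have hnd' : (normSq d : ℂ) ≠ 0 := by exact_mod_cast hnd.ne'
    push_cast
    field_simp
    rw [← mul_conj, ← h]
    ring

theorem Real.sign_mul_self_eq_abs (q : ℝ) : Real.sign q * q = |q| := by
  rcases lt_trichotomy q 0 with hq | rfl | hq
  · rw [Real.sign_of_neg hq, abs_of_neg hq]; ring
  · simp
  · rw [Real.sign_of_pos hq, abs_of_pos hq]; ring

noncomputable def normalForm (q : ℝ) : Matrix (Fin 2) (Fin 2) ℂ :=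
  !![0, ((Real.sqrt |q| : ℝ) : ℂ); -((Real.sign q : ℝ) : ℂ) / ((Real.sqrt |q| : ℝ) : ℂ), 0]

theorem antidiag_eq_smul_normalForm {q : ℝ} (hq : q ≠ 0) (d : ℂ) :
    !![0, -q * d; d, 0] = (-q * d / (√|q| : ℝ)) • normalForm q := by
  have hs : ((√|q| : ℝ) : ℂ) ≠ 0 := by
    simpa using Real.sqrt_ne_zero'.2 (abs_pos.2 hq)
  have hs2 : ((√|q| : ℝ) : ℂ) ^ 2 = Real.sign q * q := by
    exact_mod_cast (Real.sq_sqrt (abs_nonneg q)).trans (Real.sign_mul_self_eq_abs q).symm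
  simp only [normalForm, smul_of, smul_cons, smul_eq_mul, smul_empty, mul_zero,
    EmbeddingLike.apply_eq_iff_eq, vecCons_inj, and_true, true_and]
  constructor
  · field_simp
  · field_simp
    linear_combination d * hs2

def IsUnitarilyCongrNormalForm (F : Matrix (Fin 2) (Fin 2) ℂ) : Prop :=
  ∃ v ∈ unitaryGroup (Fin 2) ℂ, ∃ q : ℝ, q ∈ Set.Icc (-1 : ℝ) 1 ∧ q ≠ 0 ∧
    ∃ s : ℂ, s ≠ 0 ∧ v * F * vᵀ = s • normalForm q

theorem IsUnitarilyCongrNormalForm.of_unitary_congr {F v : Matrix (Fin 2) (Fin 2) ℂ}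
    (hv : v ∈ unitaryGroup (Fin 2) ℂ) (h : IsUnitarilyCongrNormalForm (v * F * vᵀ)) :
    IsUnitarilyCongrNormalForm F := by
  obtain ⟨w, hw, q, hq, hq0, s, hs, h⟩ := h
  refine ⟨w * v, mul_mem hw hv, q, hq, hq0, s, hs, ?_⟩
  rw [transpose_mul, ← h]
  noncomm_ring

theorem isUnitarilyCongrNormalForm_antidiag {b d : ℂ} {c : ℝ} (hc : c ≠ 0)
    (h : b * conj d = c) : IsUnitarilyCongrNormalForm !![0, b; d, 0] := by
  wlog hle : normSq b ≤ normSq d generalizing b d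
  · have hswap : !![(0 : ℂ), 1; 1, 0] ∈ unitaryGroup (Fin 2) ℂ := by
      rw [mem_unitaryGroup_iff, star_eq_conjTranspose]
      ext i j
      fin_cases i <;> fin_cases j <;> simp [mul_apply, Fin.sum_univ_two]
    refine .of_unitary_congr hswap ?_
    have hswap_congr :
        !![(0 : ℂ), 1; 1, 0] * !![0, b; d, 0] * !![(0 : ℂ), 1; 1, 0]ᵀ = !![0, d; b, 0] := by
      ext i j
      fin_cases i <;> fin_cases j <;> simp [mul_apply, Fin.sum_univ_two]
    rw [hswap_congr]
    exact this (by simpa [mul_comm] using congrArg conj h) (le_of_not_ge hle)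
  obtain ⟨q, hq, hq0, rfl⟩ := exists_real_eq_neg_mul_of_mul_conj_eq hc h hle
  have hd : d ≠ 0 := by
    rintro rfl
    exact hc (by simpa using h.symm)
  refine ⟨1, one_mem _, q, hq, hq0, -q * d / (√|q| : ℝ), ?_, ?_⟩
  · have : √|q| ≠ 0 := Real.sqrt_ne_zero'.2 (abs_pos.2 hq0)
    simp [hq0, hd, this]
  · rw [transpose_one, Matrix.mul_one, Matrix.one_mul]
    exact antidiag_eq_smul_normalForm hq0 d

/-- every `F ∈ GL(2,ℂ)` with `F·conj(F) = c·I₂`, `c ∈ ℝ`, is equivalent —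
under `F₁ ∼ F₂ ⟺ ∃ v ∈ U(2), F₁ = v F₂ vᵀ`, up to scaling — to the matrix
`F_q = ((0, |q|^{1/2}), (−sgn(q)|q|^{−1/2}, 0))` for some `q ∈ [−1,1] \ {0}`. -/
theorem gl2_normal_form (F : Matrix (Fin 2) (Fin 2) ℂ) (hF : IsUnit F.det)
    (c : ℝ) (hc : F * F.map (starRingEnd ℂ) = (c : ℂ) • (1 : Matrix (Fin 2) (Fin 2) ℂ)) :
    ∃ v ∈ Matrix.unitaryGroup (Fin 2) ℂ, ∃ q : ℝ,
      q ∈ Set.Icc (-1 : ℝ) 1 ∧ q ≠ 0 ∧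
      ∃ s : ℂ, s ≠ 0 ∧
        v * F * v.transpose =
          s • !![0, ((Real.sqrt |q| : ℝ) : ℂ);
                 -((Real.sign q : ℝ) : ℂ) / ((Real.sqrt |q| : ℝ) : ℂ), 0] := by
  have hc0 : c ≠ 0 := by exact_mod_cast ne_zero_of_mul_map_conj_eq_smul_one hF hc
  obtain ⟨v, hv, h00⟩ := exists_unitary_congr_apply_zero_zero F
  obtain ⟨hG, hbd⟩ :=
    eq_antidiag_of_mul_map_conj_eq_smul_one (mul_map_conj_unitary_congr hv hc) h00
  have hnormal := isUnitarilyCongrNormalForm_antidiag hc0 hbd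
  rw [← hG] at hnormal
  exact hnormal.of_unitary_congr hv
end

section
/- Let (A, Δ) be a compact quantum group with Haar state h, and let β : B → A ⊗ B be an ergodic left action on a unital C*-algebra B with unique invariant state ω (satisfying (h ⊗ id)β(b) = ω(b)·1 for all b ∈ B, where the expression means applying h to the first leg). Let (L²(B), Λ) be the GNS construction for ω, and let β′ be the induced isometry on L²(B) with β′(Λ(b)) = (id ⊗ Λ)(β(b)). If ξ ∈ L²(B) satisfies β′(ξ) = 1_A ⊗ ξ, then ξ ∈ ℂ·Λ(1_B). -/
/-! The averaging operator `P = (h ⊗ id) ∘ β′` is continuous and sends the dense subspace `Λ(B)`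
into the closed line `ℂ·Λ(1)`, so its whole range lies there; a fixed vector satisfies `ξ = P ξ`. -/

theorem ContinuousLinearMap.apply_mem_span_singleton_of_denseRange
    {α 𝕜 E F : Type*} [NontriviallyNormedField 𝕜] [CompleteSpace 𝕜]
    [NormedAddCommGroup E] [NormedSpace 𝕜 E] [NormedAddCommGroup F] [NormedSpace 𝕜 F]
    (P : E →L[𝕜] F) {g : α → E} (hg : DenseRange g) {v : F}
    (h : ∀ a, P (g a) ∈ 𝕜 ∙ v) (x : E) : P x ∈ 𝕜 ∙ v :=
  hg.induction_on x ((𝕜 ∙ v).closed_of_finiteDimensional.preimage P.continuous) h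

/-- `W` models `A ⊗ L²(B)`. -/
theorem ergodic_fixed_vector_general
    {B L W : Type*} [Ring B] [Algebra ℂ B]
    [NormedAddCommGroup L] [InnerProductSpace ℂ L]
    [NormedAddCommGroup W] [InnerProductSpace ℂ W]
    (Λ : B →ₗ[ℂ] L) (hΛdense : DenseRange ⇑Λ)
    (ω : B →ₗ[ℂ] ℂ)
    (β' : L →L[ℂ] W)        -- the unitary representation `β′ : L²(B) → A ⊗ L²(B)`
    (hmap : W →L[ℂ] L)      -- the slice map `h ⊗ id`
    (e : L →L[ℂ] W)         -- `ξ ↦ 1_A ⊗ ξ`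
    (he : ∀ ξ : L, hmap (e ξ) = ξ)
    (hinvariance : ∀ b : B, hmap (β' (Λ b)) = ω b • Λ 1)
    (ξ : L) (hfix : β' ξ = e ξ) :
    ∃ cst : ℂ, ξ = cst • Λ 1 := by
  have hrange : ∀ b, (hmap ∘L β') (Λ b) ∈ ℂ ∙ Λ 1 := fun b => by
    rw [ContinuousLinearMap.comp_apply, hinvariance]
    exact Submodule.smul_mem _ _ (Submodule.mem_span_singleton_self _)
  have hξ : (hmap ∘L β') ξ = ξ := by
    rw [ContinuousLinearMap.comp_apply, hfix, he]
  obtain ⟨c, hc⟩ := Submodule.mem_span_singleton.mp <|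
    hξ ▸ (hmap ∘L β').apply_mem_span_singleton_of_denseRange hΛdense hrange ξ
  exact ⟨c, hc.symm⟩

/-- for an ergodic action `β` of a compact quantum group `(A,Δ)` with Haar
state `h` on a unital C*-algebra `B`, with invariant state `ω` (so `(h⊗id)β(b) = ω(b)1`),
any vector `ξ` of the GNS space `L²(B)` fixed by the induced representation
(`β′(ξ) = 1 ⊗ ξ`) lies in `ℂ·Λ(1)`.  Here the Hilbert space `W` plays the role of
`A ⊗ L²(B)`, `e : ξ ↦ 1_A ⊗ ξ`, and `hmap` the slice map `h ⊗ id : A ⊗ L²(B) → L²(B)`,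
so that the invariance of `ω` reads `hmap (β′(Λ b)) = ω(b)·Λ(1)`. -/
theorem ergodic_fixed_vector
    {B L W : Type*} [Ring B] [Algebra ℂ B]
    [NormedAddCommGroup L] [InnerProductSpace ℂ L] [CompleteSpace L]
    [NormedAddCommGroup W] [InnerProductSpace ℂ W] [CompleteSpace W]
    (Λ : B →ₗ[ℂ] L) (hΛdense : DenseRange ⇑Λ)
    (ω : B →ₗ[ℂ] ℂ)
    (β' : L →L[ℂ] W)        -- the unitary representation `β′ : L²(B) → A ⊗ L²(B)`
    (hmap : W →L[ℂ] L)      -- the slice map `h ⊗ id`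
    (e : L →L[ℂ] W)         -- `ξ ↦ 1_A ⊗ ξ`
    (he : ∀ ξ : L, hmap (e ξ) = ξ)
    (hinvariance : ∀ b : B, hmap (β' (Λ b)) = ω b • Λ 1)
    (ξ : L) (hfix : β' ξ = e ξ) :
    ∃ cst : ℂ, ξ = cst • Λ 1 :=
  ergodic_fixed_vector_general Λ hΛdense ω β' hmap e he hinvariance ξ hfix
end
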